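/- arXiv:2505.22475 — 4 statements merged into one kernel-verified Lean document; each statement's English description precedes it below -/
import Mathlib

section
/- Let K ≥ 1 be a natural number and let t be a natural number with t ≥ 10K⁴. Then for every integer s with ⌈√t⌉ ≤ s ≤ t one has √(s + K²) − 2K > 0, and moreover Σ_{s=⌈√t⌉}^{t} 1/(√(s + K²) − 2K) ≤ 8√t + 8K·log t. -/
/-!
Past `s = 3K²` the denominator is positive, and rationalizing it together with
`√(s + K²) ≤ √s + K` gives `1 / (√(s + K²) - 2K) ≤ 1 / √s + 5K / (s - 3K²)`.
The first terms sum to at most `2√t` by telescoping against `2√s - 2√(s - 1)`; the second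
ones form a shifted harmonic sum, at most `5K (1 + log t)`. The hypothesis `t ≥ 10K⁴`
makes the range start beyond `3K²` (as `9K⁴ < t`) and gives `K ≤ √t`, which absorbs `5K`.
-/

open Real Finset

lemma sqrt_add_sq_sub_two_mul_pos {x K : ℝ} (hx : 3 * K ^ 2 < x) :
    0 < √(x + K ^ 2) - 2 * K :=
  sub_pos.mpr (lt_sqrt_of_sq_lt (by linarith))

lemma sqrt_add_sq_le_sqrt_add {x K : ℝ} (hx : 0 ≤ x) (hK : 0 ≤ K) : √(x + K ^ 2) ≤ √x + K :=
  sqrt_le_iff.mpr ⟨by positivity, by nlinarith [sq_sqrt hx, sqrt_nonneg x]⟩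

lemma one_div_sqrt_add_sq_sub_le {x K : ℝ} (hK : 0 ≤ K) (hx : 3 * K ^ 2 < x) :
    1 / (√(x + K ^ 2) - 2 * K) ≤ 1 / √x + 5 * K / (x - 3 * K ^ 2) := by
  have hx0 : 0 < x := by nlinarith
  have hd : 0 < x - 3 * K ^ 2 := sub_pos.mpr hx
  have hy : 0 < √x := sqrt_pos.mpr hx0
  have hyy : √x ^ 2 = x := sq_sqrt hx0.le
  have huu : √(x + K ^ 2) ^ 2 = x + K ^ 2 := sq_sqrt (by positivity)
  have hu : √(x + K ^ 2) ≤ √x + K := sqrt_add_sq_le_sqrt_add hx0.le hK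
  have h3K : 3 * K ≤ 2 * √x := by nlinarith
  have hrat : 1 / (√(x + K ^ 2) - 2 * K) = (√(x + K ^ 2) + 2 * K) / (x - 3 * K ^ 2) := by
    rw [div_eq_div_iff (sqrt_add_sq_sub_two_mul_pos hx).ne' hd.ne']
    linear_combination -huu
  have hsplit : 1 / √x + 5 * K / (x - 3 * K ^ 2)
      = (x - 3 * K ^ 2 + 5 * K * √x) / (√x * (x - 3 * K ^ 2)) := by
    rw [div_add_div _ _ hy.ne' hd.ne']
    ring
  rw [hrat, hsplit, div_le_div_iff₀ hd (mul_pos hy hd), ← mul_assoc]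
  gcongr
  nlinarith [mul_le_mul_of_nonneg_left h3K hK]

lemma sum_range_one_div_sqrt_le (n : ℕ) : ∑ i ∈ range (n + 1), 1 / √(i : ℝ) ≤ 2 * √(n : ℝ) := by
  have step (i : ℕ) : 1 / √((i + 1 : ℕ) : ℝ) ≤ 2 * √((i + 1 : ℕ) : ℝ) - 2 * √(i : ℝ) := by
    have hi : 0 < √((i + 1 : ℕ) : ℝ) := sqrt_pos.mpr (by positivity)
    rw [div_le_iff₀ hi]
    have hu : √((i + 1 : ℕ) : ℝ) ^ 2 = (i : ℝ) + 1 := by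
      rw [sq_sqrt (by positivity)]; push_cast; ring
    have hv : √(i : ℝ) ^ 2 = i := sq_sqrt (by positivity)
    nlinarith [sq_nonneg (√((i + 1 : ℕ) : ℝ) - √(i : ℝ))]
  calc ∑ i ∈ range (n + 1), 1 / √(i : ℝ)
      = ∑ i ∈ range n, 1 / √((i + 1 : ℕ) : ℝ) := by simp [sum_range_succ']
    _ ≤ ∑ i ∈ range n, (2 * √((i + 1 : ℕ) : ℝ) - 2 * √(i : ℝ)) := sum_le_sum fun i _ => step i
    _ = 2 * √(n : ℝ) := by rw [sum_range_sub (fun i => 2 * √(i : ℝ))]; simp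

lemma sum_Icc_one_div_sqrt_le (a n : ℕ) : ∑ i ∈ Icc a n, 1 / √(i : ℝ) ≤ 2 * √(n : ℝ) :=
  calc ∑ i ∈ Icc a n, 1 / √(i : ℝ) ≤ ∑ i ∈ range (n + 1), 1 / √(i : ℝ) := by
        refine sum_le_sum_of_subset_of_nonneg ?_ fun _ _ _ => by positivity
        intro i hi
        simp only [mem_Icc] at hi
        simp only [mem_range]
        omega
    _ ≤ 2 * √(n : ℝ) := sum_range_one_div_sqrt_le n

lemma sum_Icc_one_div_sub_le_harmonic {c a : ℕ} (hca : c < a) (n : ℕ) :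
    ∑ i ∈ Icc a n, 1 / ((i : ℝ) - c) ≤ harmonic n := by
  calc ∑ i ∈ Icc a n, 1 / ((i : ℝ) - c) ≤ ∑ i ∈ Icc (c + 1) (c + n), 1 / ((i : ℝ) - c) := by
        refine sum_le_sum_of_subset_of_nonneg (Icc_subset_Icc (by omega) (by omega)) ?_
        intro i hi _
        have : (c : ℝ) + 1 ≤ i := by exact_mod_cast (mem_Icc.mp hi).1
        exact one_div_nonneg.mpr (by linarith)
    _ = harmonic n := by
        rw [← map_add_left_Icc, sum_map, harmonic_eq_sum_Icc]
        push_cast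
        simp

/-- For `K ≥ 1` and `t ≥ 10K⁴`, every integer `s` with `⌈√t⌉ ≤ s ≤ t` satisfies
`√(s + K²) − 2K > 0`, and `∑_{s=⌈√t⌉}^{t} 1/(√(s + K²) − 2K) ≤ 8√t + 8K log t`. -/
theorem sum_inv_sqrt_shift_le (K t : ℕ) (hK : 1 ≤ K) (ht : 10 * K ^ 4 ≤ t) :
    (∀ s ∈ Finset.Icc ⌈Real.sqrt (t : ℝ)⌉₊ t,
        0 < Real.sqrt ((s : ℝ) + (K : ℝ) ^ 2) - 2 * (K : ℝ)) ∧
    ∑ s ∈ Finset.Icc ⌈Real.sqrt (t : ℝ)⌉₊ t,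
        1 / (Real.sqrt ((s : ℝ) + (K : ℝ) ^ 2) - 2 * (K : ℝ)) ≤
      8 * Real.sqrt (t : ℝ) + 8 * (K : ℝ) * Real.log (t : ℝ) := by
  have hK1 : (1 : ℝ) ≤ K := by exact_mod_cast hK
  have ht' : 10 * (K : ℝ) ^ 4 ≤ t := by exact_mod_cast ht
  have hK2 : (1 : ℝ) ≤ K ^ 2 := one_le_pow₀ hK1
  have hKsq : (K : ℝ) ^ 2 ≤ t := by nlinarith
  have hKt : (K : ℝ) ≤ √t := le_sqrt_of_sq_le hKsq
  have hlog : 0 ≤ Real.log t := log_nonneg (by linarith)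
  have hstart : 3 * K ^ 2 < ⌈√(t : ℝ)⌉₊ :=
    Nat.lt_ceil.mpr (lt_sqrt_of_sq_lt (by push_cast; nlinarith))
  have hlarge : ∀ s ∈ Icc ⌈√(t : ℝ)⌉₊ t, 3 * (K : ℝ) ^ 2 < s := fun s hs => by
    exact_mod_cast hstart.trans_le (mem_Icc.mp hs).1
  refine ⟨fun s hs => sqrt_add_sq_sub_two_mul_pos (hlarge s hs), ?_⟩
  calc _ ≤ ∑ s ∈ Icc ⌈√(t : ℝ)⌉₊ t, (1 / √(s : ℝ) + 5 * K / ((s : ℝ) - 3 * K ^ 2)) :=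
        sum_le_sum fun s hs => one_div_sqrt_add_sq_sub_le (by positivity) (hlarge s hs)
    _ = ∑ s ∈ Icc ⌈√(t : ℝ)⌉₊ t, 1 / √(s : ℝ) +
          5 * K * ∑ s ∈ Icc ⌈√(t : ℝ)⌉₊ t, 1 / ((s : ℝ) - (3 * K ^ 2 : ℕ)) := by
        rw [sum_add_distrib, mul_sum]
        push_cast
        simp only [mul_one_div]
    _ ≤ 2 * √(t : ℝ) + 5 * K * (1 + Real.log t) := by
        gcongr
        · exact sum_Icc_one_div_sqrt_le _ t
        · exact (sum_Icc_one_div_sub_le_harmonic hstart t).trans (harmonic_le_one_add_log t)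
    _ ≤ 8 * √(t : ℝ) + 8 * K * Real.log t := by
        nlinarith [mul_nonneg (by positivity : (0 : ℝ) ≤ K) hlog]
end

section
/- Let K ≥ 1 be a natural number and let t be a natural number with t ≥ 10K⁴. Then Σ_{s=⌈√t⌉}^{t} 1/√(√(s + K²) − 2K) ≤ √(8·t^{3/2} + 8K·t·log t). -/
open Real

/-- `∑_{s=1}^{n} 1/√s ≤ 2√n`. -/
lemma aux_sum_inv_sqrt_le (n : ℕ) :
    ∑ s ∈ Finset.Icc 1 n, 1 / Real.sqrt (s : ℝ) ≤ 2 * Real.sqrt (n : ℝ) := by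
  induction n with
  | zero => simp
  | succ n ih =>
    rw [Finset.sum_Icc_succ_top (by omega)]
    have h1 : Real.sqrt ((n : ℝ) + 1) * Real.sqrt ((n : ℝ) + 1) = (n : ℝ) + 1 :=
      Real.mul_self_sqrt (by positivity)
    have h2 : Real.sqrt (n : ℝ) * Real.sqrt (n : ℝ) = (n : ℝ) :=
      Real.mul_self_sqrt (by positivity)
    have h3 : (0 : ℝ) < Real.sqrt ((n : ℝ) + 1) := Real.sqrt_pos.mpr (by positivity)
    have h4 : (0 : ℝ) ≤ Real.sqrt (n : ℝ) := Real.sqrt_nonneg _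
    have key : 1 / Real.sqrt ((n : ℝ) + 1) ≤
        2 * Real.sqrt ((n : ℝ) + 1) - 2 * Real.sqrt (n : ℝ) := by
      rw [div_le_iff₀ h3]
      nlinarith [sq_nonneg (Real.sqrt ((n : ℝ) + 1) - Real.sqrt (n : ℝ))]
    have hcast : ((n + 1 : ℕ) : ℝ) = (n : ℝ) + 1 := by push_cast; ring
    rw [hcast]
    linarith

/-- Harmonic sum bound. -/
lemma aux_sum_inv_le (n : ℕ) :
    ∑ s ∈ Finset.Icc 1 n, 1 / (s : ℝ) ≤ 1 + Real.log (n : ℝ) := by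
  have h := harmonic_le_one_add_log n
  have heq : ((harmonic n : ℚ) : ℝ) = ∑ s ∈ Finset.Icc 1 n, 1 / (s : ℝ) := by
    rw [harmonic_eq_sum_Icc]
    push_cast
    simp [one_div]
  linarith [heq ▸ h]

set_option maxHeartbeats 1000000 in
/-- For `K ≥ 1` and `t ≥ 10K⁴`,
`∑_{s=⌈√t⌉}^{t} 1/√(√(s + K²) − 2K) ≤ √(8 t^{3/2} + 8 K t log t)`. -/
theorem sum_inv_sqrt_sqrt_shift_le (K t : ℕ) (hK : 1 ≤ K) (ht : 10 * K ^ 4 ≤ t) :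
    ∑ s ∈ Finset.Icc ⌈Real.sqrt (t : ℝ)⌉₊ t,
        1 / Real.sqrt (Real.sqrt ((s : ℝ) + (K : ℝ) ^ 2) - 2 * (K : ℝ)) ≤
      Real.sqrt (8 * (t : ℝ) ^ ((3 : ℝ) / 2) + 8 * (K : ℝ) * (t : ℝ) * Real.log (t : ℝ)) := by
  set m : ℕ := ⌈Real.sqrt (t : ℝ)⌉₊ with hm
  have hK1 : (1 : ℝ) ≤ (K : ℝ) := by exact_mod_cast hK
  have htR : (10 : ℝ) * (K : ℝ) ^ 4 ≤ (t : ℝ) := by exact_mod_cast ht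
  have hK4 : (1 : ℝ) ≤ (K : ℝ) ^ 4 := by
    calc (1:ℝ) = 1 ^ 4 := by norm_num
      _ ≤ (K : ℝ) ^ 4 := by gcongr <;> linarith
  have ht10 : (10 : ℝ) ≤ (t : ℝ) := by nlinarith
  have htpos : (0 : ℝ) < (t : ℝ) := by linarith
  -- √t > 3K²
  have hsqt : 3 * (K : ℝ) ^ 2 < Real.sqrt (t : ℝ) := by
    rw [show (3 : ℝ) * (K : ℝ) ^ 2 = Real.sqrt ((3 * (K : ℝ) ^ 2) ^ 2) from
      (Real.sqrt_sq (by positivity)).symm]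
    apply Real.sqrt_lt_sqrt (by positivity)
    nlinarith
  have hmt : (m : ℝ) ≥ Real.sqrt (t : ℝ) := Nat.le_ceil _
  have hmK : 3 * K ^ 2 < m := by
    have h1 : ((3 * K ^ 2 : ℕ) : ℝ) < (m : ℝ) := by push_cast; linarith
    exact_mod_cast h1
  have hK2 : 1 ≤ K ^ 2 := Nat.one_le_pow _ _ (by omega)
  have hm1 : 1 ≤ m := by omega
  have hst2 : Real.sqrt (t : ℝ) ≤ (t : ℝ) := by
    have h1 : Real.sqrt (t : ℝ) ≤ Real.sqrt ((t : ℝ) ^ 2) := Real.sqrt_le_sqrt (by nlinarith)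
    rwa [Real.sqrt_sq htpos.le] at h1
  have hmt2 : m ≤ t := Nat.ceil_le.mpr (by exact_mod_cast hst2)
  have h3Kt : 3 * K ^ 2 < t := by omega
  -- pointwise facts
  have hmem : ∀ s ∈ Finset.Icc m t, 3 * (K : ℝ) ^ 2 < (s : ℝ) := by
    intro s hs
    have h1 := (Finset.mem_Icc.mp hs).1
    have h2 : (m : ℝ) ≤ (s : ℝ) := by exact_mod_cast h1
    linarith
  have hapos : ∀ s ∈ Finset.Icc m t,
      0 < Real.sqrt ((s : ℝ) + (K : ℝ) ^ 2) - 2 * (K : ℝ) := by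
    intro s hs
    have hs3 := hmem s hs
    have h2 : 2 * (K : ℝ) < Real.sqrt ((s : ℝ) + (K : ℝ) ^ 2) := by
      rw [show (2 : ℝ) * (K : ℝ) = Real.sqrt ((2 * (K : ℝ)) ^ 2) from
        (Real.sqrt_sq (by positivity)).symm]
      apply Real.sqrt_lt_sqrt (by positivity)
      nlinarith
    linarith
  -- Step A : sum of reciprocals
  have hA : ∑ s ∈ Finset.Icc m t,
      1 / (Real.sqrt ((s : ℝ) + (K : ℝ) ^ 2) - 2 * (K : ℝ)) ≤
      8 * Real.sqrt (t : ℝ) + 8 * (K : ℝ) * Real.log (t : ℝ) := by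
    have hpt : ∀ s ∈ Finset.Icc m t,
        1 / (Real.sqrt ((s : ℝ) + (K : ℝ) ^ 2) - 2 * (K : ℝ)) ≤
        (8 / 3) * (1 / Real.sqrt (s : ℝ)) + 8 * (K : ℝ) * (1 / ((s : ℝ) - 3 * (K : ℝ) ^ 2)) := by
      intro s hs
      have hs3 := hmem s hs
      have ha := hapos s hs
      set u : ℝ := Real.sqrt ((s : ℝ) + (K : ℝ) ^ 2) with hu
      have hu2 : u * u = (s : ℝ) + (K : ℝ) ^ 2 := Real.mul_self_sqrt (by positivity)
      have hupos : 0 < u := by linarith [ha, hK1]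
      have hspos : (0 : ℝ) < Real.sqrt (s : ℝ) := Real.sqrt_pos.mpr (by nlinarith)
      have hsu : Real.sqrt (s : ℝ) ≤ u := Real.sqrt_le_sqrt (by nlinarith)
      have hd : (0 : ℝ) < (s : ℝ) - 3 * (K : ℝ) ^ 2 := by linarith
      by_cases hcase : 4 * (K : ℝ) ≤ u
      · have hmain : 1 / (u - 2 * (K : ℝ)) ≤ (8 / 3) * (1 / Real.sqrt (s : ℝ)) := by
          rw [div_le_iff₀ ha]
          have h1 : 8 / 3 * (1 / Real.sqrt (s : ℝ)) * (u - 2 * (K : ℝ)) =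
              (8 / 3 * (u - 2 * (K : ℝ))) / Real.sqrt (s : ℝ) := by
            rw [one_div]; ring
          rw [h1, le_div_iff₀ hspos, one_mul]
          linarith
        have h0 : 0 ≤ 8 * (K : ℝ) * (1 / ((s : ℝ) - 3 * (K : ℝ) ^ 2)) := by positivity
        linarith
      · push_neg at hcase
        have hmain : 1 / (u - 2 * (K : ℝ)) ≤
            8 * (K : ℝ) * (1 / ((s : ℝ) - 3 * (K : ℝ) ^ 2)) := by
          rw [mul_one_div, div_le_div_iff₀ ha hd]
          nlinarith
        have h0 : 0 ≤ (8 / 3 : ℝ) * (1 / Real.sqrt (s : ℝ)) := by positivity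
        linarith
    have hsplit := Finset.sum_le_sum hpt
    rw [Finset.sum_add_distrib, ← Finset.mul_sum, ← Finset.mul_sum] at hsplit
    -- bound the sqrt part
    have hB1 : ∑ s ∈ Finset.Icc m t, 1 / Real.sqrt (s : ℝ) ≤ 2 * Real.sqrt (t : ℝ) := by
      refine le_trans (Finset.sum_le_sum_of_subset_of_nonneg ?_ ?_) (aux_sum_inv_sqrt_le t)
      · exact Finset.Icc_subset_Icc_left hm1
      · intro i _ _; positivity
    -- bound the harmonic part, via reindexing
    have hB2 : ∑ s ∈ Finset.Icc m t, 1 / ((s : ℝ) - 3 * (K : ℝ) ^ 2) ≤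
        1 + Real.log (t : ℝ) := by
      have hre : ∑ s ∈ Finset.Icc m t, 1 / ((s : ℝ) - 3 * (K : ℝ) ^ 2) =
          ∑ j ∈ Finset.Icc (m - 3 * K ^ 2) (t - 3 * K ^ 2), 1 / ((j : ℕ) : ℝ) := by
        refine Finset.sum_nbij' (fun s => s - 3 * K ^ 2) (fun j => j + 3 * K ^ 2)
          ?_ ?_ ?_ ?_ ?_
        · intro a ha; simp only [Finset.mem_Icc] at ha ⊢; omega
        · intro a ha; simp only [Finset.mem_Icc] at ha ⊢; omega
        · intro a ha; simp only [Finset.mem_Icc] at ha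
          show a - 3 * K ^ 2 + 3 * K ^ 2 = a; omega
        · intro a ha; simp only [Finset.mem_Icc] at ha
          show a + 3 * K ^ 2 - 3 * K ^ 2 = a; omega
        · intro a ha
          simp only [Finset.mem_Icc] at ha
          have h3a : 3 * K ^ 2 ≤ a := by omega
          rw [Nat.cast_sub h3a]
          push_cast
          ring_nf
      rw [hre]
      refine le_trans (Finset.sum_le_sum_of_subset_of_nonneg ?_ ?_) (aux_sum_inv_le t)
      · apply Finset.Icc_subset_Icc <;> omega
      · intro i _ _; positivity
    have hlog : (0 : ℝ) ≤ Real.log (t : ℝ) := Real.log_nonneg (by linarith)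
    have hKsqt : 3 * (K : ℝ) ≤ Real.sqrt (t : ℝ) := by nlinarith
    have hS1 : (0 : ℝ) ≤ ∑ s ∈ Finset.Icc m t, 1 / Real.sqrt (s : ℝ) :=
      Finset.sum_nonneg fun i _ => by positivity
    calc ∑ s ∈ Finset.Icc m t, 1 / (Real.sqrt ((s : ℝ) + (K : ℝ) ^ 2) - 2 * (K : ℝ))
        ≤ 8 / 3 * (2 * Real.sqrt (t : ℝ)) + 8 * (K : ℝ) * (1 + Real.log (t : ℝ)) := by
          refine le_trans hsplit ?_
          gcongr
      _ ≤ 8 * Real.sqrt (t : ℝ) + 8 * (K : ℝ) * Real.log (t : ℝ) := by nlinarith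
  -- Step B : Cauchy–Schwarz
  set S : ℝ := ∑ s ∈ Finset.Icc m t,
      1 / Real.sqrt (Real.sqrt ((s : ℝ) + (K : ℝ) ^ 2) - 2 * (K : ℝ)) with hS
  have hSnonneg : 0 ≤ S := Finset.sum_nonneg fun i _ => by positivity
  have hCS : S ^ 2 ≤ (Finset.Icc m t).card *
      ∑ s ∈ Finset.Icc m t, 1 / (Real.sqrt ((s : ℝ) + (K : ℝ) ^ 2) - 2 * (K : ℝ)) := by
    have hcs := sq_sum_le_card_mul_sum_sq
      (s := Finset.Icc m t)
      (f := fun s => 1 / Real.sqrt (Real.sqrt ((s : ℝ) + (K : ℝ) ^ 2) - 2 * (K : ℝ)))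
    refine le_trans hcs (le_of_eq ?_)
    congr 1
    refine Finset.sum_congr rfl fun s hs => ?_
    have ha := hapos s hs
    rw [div_pow, one_pow, Real.sq_sqrt (le_of_lt ha)]
  have hcard : ((Finset.Icc m t).card : ℝ) ≤ (t : ℝ) := by
    rw [Nat.card_Icc]
    have h1 : t + 1 - m ≤ t := by omega
    exact_mod_cast h1
  have hApos : 0 ≤ ∑ s ∈ Finset.Icc m t,
      1 / (Real.sqrt ((s : ℝ) + (K : ℝ) ^ 2) - 2 * (K : ℝ)) :=
    Finset.sum_nonneg fun s hs => le_of_lt (by have := hapos s hs; positivity)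
  have hfinal : S ^ 2 ≤ 8 * (t : ℝ) ^ ((3 : ℝ) / 2) + 8 * (K : ℝ) * (t : ℝ) * Real.log (t : ℝ) := by
    have h32 : (t : ℝ) ^ ((3 : ℝ) / 2) = (t : ℝ) * Real.sqrt (t : ℝ) := by
      rw [Real.sqrt_eq_rpow, show ((3 : ℝ) / 2) = 1 + 1 / 2 by norm_num,
        Real.rpow_add htpos, Real.rpow_one]
    rw [h32]
    calc S ^ 2 ≤ ((Finset.Icc m t).card : ℝ) *
          ∑ s ∈ Finset.Icc m t, 1 / (Real.sqrt ((s : ℝ) + (K : ℝ) ^ 2) - 2 * (K : ℝ)) := hCS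
      _ ≤ (t : ℝ) * (8 * Real.sqrt (t : ℝ) + 8 * (K : ℝ) * Real.log (t : ℝ)) :=
          mul_le_mul hcard hA hApos (le_of_lt htpos)
      _ = 8 * ((t : ℝ) * Real.sqrt (t : ℝ)) + 8 * (K : ℝ) * (t : ℝ) * Real.log (t : ℝ) := by ring
  calc S = Real.sqrt (S ^ 2) := (Real.sqrt_sq hSnonneg).symm
    _ ≤ _ := Real.sqrt_le_sqrt hfinal
end

section
/- Let a > 0, let K ≥ 1 be a natural number, and let c₁, c₂ ≥ 0. For δ ∈ (0, 1) and natural numbers t ≥ 1, define β_{t,δ} = log(1/δ) + K·log(4·log(1/δ) + 1) + 6K·log(log t + 3), g(t) = c₁·√t + c₂·t^{3/4}, and T₀(δ) = inf{t ∈ ℕ : t ≥ 1 and β_{t,δ} ≤ (t − √t − 1)·a − g(t)}. Then for every ε > 0 there exists δ₀ ∈ (0, 1) such that for all δ ∈ (0, δ₀), T₀(δ) ≤ (1 + ε)·log(1/δ)/a; in particular limsup_{δ → 0⁺} T₀(δ)/log(1/δ) ≤ 1/a. -/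
open Real Filter Asymptotics

private lemma rpow_isLittleO_id {p : ℝ} (hp : p < 1) :
    (fun x : ℝ => x ^ p) =o[atTop] (id : ℝ → ℝ) := by
  rw [isLittleO_iff_tendsto' (by
    filter_upwards [eventually_gt_atTop (0:ℝ)] with x hx h0
    exact absurd h0 (by simpa using hx.ne'))]
  have h := tendsto_rpow_neg_atTop (show (0:ℝ) < 1 - p by linarith)
  refine h.congr' ?_
  filter_upwards [eventually_gt_atTop (0:ℝ)] with x hx
  have : -(1 - p) = p - 1 := by ring
  rw [this, Real.rpow_sub hx, Real.rpow_one, id]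

set_option maxHeartbeats 1000000 in
/-- Asymptotic optimality: for every `ε > 0` there is `δ₀ ∈ (0,1)` such that for all
`δ ∈ (0, δ₀)`, the time `T₀(δ) = inf {t ≥ 1 : β_{t,δ} ≤ (t − √t − 1)·a − g(t)}`
satisfies `T₀(δ) ≤ (1 + ε)·log(1/δ)/a`. -/
theorem stopping_time_asymptotically_optimal
    (a : ℝ) (ha : 0 < a)
    (K : ℕ) (hK : 1 ≤ K)
    (c₁ c₂ : ℝ) (hc₁ : 0 ≤ c₁) (hc₂ : 0 ≤ c₂) :
    ∀ ε : ℝ, 0 < ε → ∃ δ₀ : ℝ, 0 < δ₀ ∧ δ₀ < 1 ∧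
      ∀ δ : ℝ, 0 < δ → δ < δ₀ →
        ((sInf {t : ℕ | 1 ≤ t ∧
          Real.log (1 / δ) + (K : ℝ) * Real.log (4 * Real.log (1 / δ) + 1) +
              6 * (K : ℝ) * Real.log (Real.log (t : ℝ) + 3) ≤
            ((t : ℝ) - Real.sqrt (t : ℝ) - 1) * a -
              (c₁ * Real.sqrt (t : ℝ) + c₂ * (t : ℝ) ^ ((3 : ℝ) / 4))} : ℕ) : ℝ) ≤
          (1 + ε) * Real.log (1 / δ) / a := by
  intro ε hε
  set C : ℝ := (1 + ε / 2) / a + 1 with hCdef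
  have hC : 0 < C := by positivity
  set F : ℝ → ℝ := fun L => (K : ℝ) * Real.log (4 * L + 1) +
      6 * (K : ℝ) * Real.log ((C + 3) * L) +
      (a + c₁) * Real.sqrt (C * L) + c₂ * (C * L) ^ ((3:ℝ)/4) + a with hFdef
  -- F is little-o of id
  have h1 : (fun L : ℝ => Real.log (4 * L + 1)) =o[atTop] (id : ℝ → ℝ) := by
    have htend : Tendsto (fun L : ℝ => 4 * L + 1) atTop atTop :=
      tendsto_atTop_add_const_right _ 1 (tendsto_id.const_mul_atTop (by norm_num))
    refine (Real.isLittleO_log_id_atTop.comp_tendsto htend).trans_isBigO ?_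
    refine IsBigO.of_bound 5 ?_
    filter_upwards [eventually_ge_atTop (1:ℝ)] with L hL
    simp only [Function.comp_apply, id_eq, Real.norm_eq_abs]
    rw [abs_of_nonneg (by linarith : (0:ℝ) ≤ 4 * L + 1), abs_of_nonneg (by linarith : (0:ℝ) ≤ L)]
    linarith
  have h2 : (fun L : ℝ => Real.log ((C + 3) * L)) =o[atTop] (id : ℝ → ℝ) := by
    have htend : Tendsto (fun L : ℝ => (C + 3) * L) atTop atTop :=
      tendsto_id.const_mul_atTop (by linarith)
    refine (Real.isLittleO_log_id_atTop.comp_tendsto htend).trans_isBigO ?_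
    refine IsBigO.of_bound (C + 3) (Eventually.of_forall fun L => ?_)
    simp only [Function.comp_apply, id_eq, Real.norm_eq_abs, abs_mul]
    rw [abs_of_nonneg (by linarith : (0:ℝ) ≤ C + 3)]
  have h3 : (fun L : ℝ => Real.sqrt (C * L)) =o[atTop] (id : ℝ → ℝ) := by
    refine ((rpow_isLittleO_id (by norm_num : (1:ℝ)/2 < 1)).const_mul_left
      (Real.sqrt C)).congr' ?_ EventuallyEq.rfl
    filter_upwards [eventually_ge_atTop (0:ℝ)] with L hL
    rw [Real.sqrt_mul hC.le, Real.sqrt_eq_rpow L]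
  have h4 : (fun L : ℝ => (C * L) ^ ((3:ℝ)/4)) =o[atTop] (id : ℝ → ℝ) := by
    refine ((rpow_isLittleO_id (by norm_num : (3:ℝ)/4 < 1)).const_mul_left
      (C ^ ((3:ℝ)/4))).congr' ?_ EventuallyEq.rfl
    filter_upwards [eventually_ge_atTop (0:ℝ)] with L hL
    rw [Real.mul_rpow hC.le hL]
  have hF : F =o[atTop] (id : ℝ → ℝ) := by
    have := ((((h1.const_mul_left (K : ℝ)).add
      (h2.const_mul_left (6 * (K : ℝ)))).add
      (h3.const_mul_left (a + c₁))).add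
      (h4.const_mul_left c₂)).add (isLittleO_const_id_atTop a)
    exact this
  -- extract eventual bound
  have hev : ∀ᶠ L in atTop, F L ≤ ε / 2 * L ∧ 1 ≤ L ∧ 2 * a / ε ≤ L := by
    filter_upwards [hF.def (show (0:ℝ) < ε / 2 by positivity),
      eventually_ge_atTop (1:ℝ), eventually_ge_atTop (2 * a / ε)] with L hb h1L h2L
    refine ⟨?_, h1L, h2L⟩
    calc F L ≤ ‖F L‖ := le_abs_self _
    _ ≤ ε / 2 * ‖id L‖ := hb
    _ = ε / 2 * L := by rw [id, Real.norm_eq_abs, abs_of_nonneg (by linarith)]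
  obtain ⟨L₀, hL₀⟩ := eventually_atTop.mp hev
  set L₁ : ℝ := max L₀ 1 with hL₁def
  refine ⟨Real.exp (-L₁), Real.exp_pos _, ?_, ?_⟩
  · rw [Real.exp_lt_one_iff, neg_lt_zero]
    exact lt_of_lt_of_le one_pos (le_max_right _ _)
  intro δ hδ0 hδ
  set L : ℝ := Real.log (1 / δ) with hLdef
  have hLgt : L₁ < L := by
    rw [hLdef, one_div, Real.log_inv, lt_neg]
    calc Real.log δ < Real.log (Real.exp (-L₁)) := Real.log_lt_log hδ0 hδ
    _ = -L₁ := Real.log_exp _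
  have hP := hL₀ L (le_of_lt (lt_of_le_of_lt (le_max_left _ _) hLgt))
  obtain ⟨hFL, hL1, hLε⟩ := hP
  have hL1' : (1:ℝ) ≤ L := hL1
  -- the candidate time
  set s : ℝ := (1 + ε / 2) * L / a with hsdef
  have hs0 : 0 < s := by positivity
  set t : ℕ := ⌈s⌉₊ with htdef
  have ht1 : 1 ≤ t := Nat.one_le_ceil_iff.mpr hs0
  have hts : s ≤ (t : ℝ) := Nat.le_ceil s
  have hts1 : (t : ℝ) ≤ s + 1 := (Nat.ceil_lt_add_one hs0.le).le
  have htC : (t : ℝ) ≤ C * L := by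
    have : s + 1 ≤ C * L := by
      rw [hCdef]
      have h' : (1 + ε / 2) / a * L = s := by rw [hsdef]; ring
      linarith
    linarith
  have ht0 : (0:ℝ) ≤ (t : ℝ) := Nat.cast_nonneg t
  have ht1' : (1:ℝ) ≤ (t : ℝ) := by exact_mod_cast ht1
  -- bounds
  have b1 : Real.sqrt (t : ℝ) ≤ Real.sqrt (C * L) := Real.sqrt_le_sqrt htC
  have b2 : (t : ℝ) ^ ((3:ℝ)/4) ≤ (C * L) ^ ((3:ℝ)/4) :=
    Real.rpow_le_rpow ht0 htC (by norm_num)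
  have b3 : Real.log (t : ℝ) + 3 ≤ (C + 3) * L := by
    have hlt : Real.log (t : ℝ) ≤ (t : ℝ) - 1 :=
      Real.log_le_sub_one_of_pos (by linarith)
    nlinarith
  have b3pos : 0 < Real.log (t : ℝ) + 3 := by
    have := Real.log_nonneg ht1'
    linarith
  have b4 : Real.log (Real.log (t : ℝ) + 3) ≤ Real.log ((C + 3) * L) :=
    Real.log_le_log b3pos b3
  have hat : (1 + ε / 2) * L ≤ a * (t : ℝ) := by
    have h := mul_le_mul_of_nonneg_left hts ha.le
    have : a * s = (1 + ε / 2) * L := by rw [hsdef]; field_simp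
    linarith
  -- membership
  have hmem : t ∈ {t : ℕ | 1 ≤ t ∧
      Real.log (1 / δ) + (K : ℝ) * Real.log (4 * Real.log (1 / δ) + 1) +
          6 * (K : ℝ) * Real.log (Real.log (t : ℝ) + 3) ≤
        ((t : ℝ) - Real.sqrt (t : ℝ) - 1) * a -
          (c₁ * Real.sqrt (t : ℝ) + c₂ * (t : ℝ) ^ ((3 : ℝ) / 4))} := by
    refine ⟨ht1, ?_⟩
    rw [← hLdef]
    have e1 : ((t : ℝ) - Real.sqrt (t : ℝ) - 1) * a -
        (c₁ * Real.sqrt (t : ℝ) + c₂ * (t : ℝ) ^ ((3 : ℝ) / 4)) =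
        a * (t : ℝ) - (a + c₁) * Real.sqrt (t : ℝ) - a - c₂ * (t : ℝ) ^ ((3:ℝ)/4) := by
      ring
    have hFLval : (K : ℝ) * Real.log (4 * L + 1) +
        6 * (K : ℝ) * Real.log ((C + 3) * L) +
        (a + c₁) * Real.sqrt (C * L) + c₂ * (C * L) ^ ((3:ℝ)/4) + a ≤ ε / 2 * L := hFL
    have m1 : 6 * (K : ℝ) * Real.log (Real.log (t : ℝ) + 3) ≤
        6 * (K : ℝ) * Real.log ((C + 3) * L) := by
      have : (0:ℝ) ≤ 6 * (K : ℝ) := by positivity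
      exact mul_le_mul_of_nonneg_left b4 this
    have m2 : (a + c₁) * Real.sqrt (t : ℝ) ≤ (a + c₁) * Real.sqrt (C * L) :=
      mul_le_mul_of_nonneg_left b1 (by linarith)
    have m3 : c₂ * (t : ℝ) ^ ((3:ℝ)/4) ≤ c₂ * (C * L) ^ ((3:ℝ)/4) :=
      mul_le_mul_of_nonneg_left b2 hc₂
    rw [e1]
    linarith
  have hsInf := Nat.sInf_le hmem
  have hcast : ((sInf {t : ℕ | 1 ≤ t ∧
      Real.log (1 / δ) + (K : ℝ) * Real.log (4 * Real.log (1 / δ) + 1) +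
          6 * (K : ℝ) * Real.log (Real.log (t : ℝ) + 3) ≤
        ((t : ℝ) - Real.sqrt (t : ℝ) - 1) * a -
          (c₁ * Real.sqrt (t : ℝ) + c₂ * (t : ℝ) ^ ((3 : ℝ) / 4))} : ℕ) : ℝ) ≤ (t : ℝ) := by
    exact_mod_cast hsInf
  have hfin : (t : ℝ) ≤ (1 + ε) * L / a := by
    have h2a : 2 * a ≤ ε * L := by
      rw [div_le_iff₀ hε] at hLε
      linarith
    have key : (1 + ε) * L / a - s = ε / 2 * L / a := by rw [hsdef]; ring
    have h2 : 1 ≤ ε / 2 * L / a := by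
      rw [le_div_iff₀ ha]
      linarith
    linarith
  exact hcast.trans hfin
end

section
/- For every natural number K ≥ 1 and every real D > 0, the series Σ_{t=1}^∞ ((log(D·t²))² · log t)^K / t² converges; moreover, for every K ≥ 1 there exists a real number D ≥ 1 such that D ≥ e·(e/K)^K · Σ_{t=1}^∞ ((log(D·t²))² · log t)^K / t². -/
open Real Filter Asymptotics

/-!
Since `log (D t²) = log D + 2 log t`, each term of the series is at most `(|log D| + 2) ^ (2K)`
times `(1 + log t) ^ (3K) / t²`, and this majorant is summable because powers of `log t` are
`o(t ^ (1/2))`. So the weighted sum grows only like a power of `log D`, and every large `D`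
dominates it.
-/

theorem isLittleO_const_add_log_pow_rpow (c : ℝ) (n : ℕ) {s : ℝ} (hs : 0 < s) :
    (fun x => (c + log x) ^ n) =o[atTop] fun x => x ^ s := by
  have h : (fun x => c + log x) =O[atTop] log :=
    isLittleO_const_log_atTop.add_isBigO (isBigO_refl _ _)
  calc (fun x => (c + log x) ^ n) =O[atTop] fun x => log x ^ (n : ℝ) := by
        simpa only [rpow_natCast] using h.pow n
    _ =o[atTop] fun x => x ^ s := isLittleO_log_rpow_rpow_atTop n hs

theorem summable_one_add_log_pow_div_rpow (n : ℕ) {p : ℝ} (hp : 1 < p) :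
    Summable fun t : ℕ => (1 + log ((t : ℝ) + 1)) ^ n / ((t : ℝ) + 1) ^ p := by
  have hdecay : (fun x => (1 + log x) ^ n / x ^ p) =O[atTop] fun x => x ^ (-((p + 1) / 2)) :=
    calc (fun x => (1 + log x) ^ n / x ^ p)
        =O[atTop] fun x => x ^ ((p - 1) / 2) / x ^ p := by
          simpa only [div_eq_mul_inv] using
            (isLittleO_const_add_log_pow_rpow 1 n (by linarith : 0 < (p - 1) / 2)).isBigO.mul
              (isBigO_refl (fun x : ℝ => (x ^ p)⁻¹) atTop)
      _ =ᶠ[atTop] fun x => x ^ (-((p + 1) / 2)) := by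
          filter_upwards [eventually_gt_atTop 0] with x hx
          rw [← rpow_sub hx]
          ring_nf
  have hshift : Tendsto (fun t : ℕ => (t : ℝ) + 1) atTop atTop :=
    tendsto_atTop_add_const_right _ 1 tendsto_natCast_atTop_atTop
  have hsum : Summable fun t : ℕ => ((t : ℝ) + 1) ^ (-((p + 1) / 2)) := by
    exact_mod_cast (summable_nat_add_iff 1).mpr (summable_nat_rpow.mpr (by linarith))
  exact summable_of_isBigO_nat hsum (hdecay.comp_tendsto hshift)

theorem abs_log_mul_sq_sq_mul_log_le {D x : ℝ} (hD : 0 < D) (hx : 1 ≤ x) :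
    |log (D * x ^ 2) ^ 2 * log x| ≤ (|log D| + 2) ^ 2 * (1 + log x) ^ 3 := by
  have hL : 0 ≤ log x := log_nonneg hx
  have hsplit : log (D * x ^ 2) = log D + 2 * log x := by
    rw [log_mul hD.ne' (by positivity), log_pow]
    push_cast
    ring
  have hlin : |log D + 2 * log x| ≤ (|log D| + 2) * (1 + log x) := by
    calc |log D + 2 * log x| ≤ |log D| + 2 * log x := by
          simpa [abs_of_nonneg hL] using abs_add_le (log D) (2 * log x)
      _ ≤ (|log D| + 2) * (1 + log x) := by nlinarith [abs_nonneg (log D)]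
  rw [abs_mul, abs_pow, hsplit, abs_of_nonneg hL]
  calc |log D + 2 * log x| ^ 2 * log x ≤ ((|log D| + 2) * (1 + log x)) ^ 2 * (1 + log x) := by
        gcongr
        linarith
    _ = (|log D| + 2) ^ 2 * (1 + log x) ^ 3 := by ring

theorem norm_log_mul_sq_sq_mul_log_pow_div_sq_le (K : ℕ) {D : ℝ} (hD : 0 < D) {x : ℝ}
    (hx : 1 ≤ x) :
    ‖(log (D * x ^ 2) ^ 2 * log x) ^ K / x ^ 2‖ ≤
      (|log D| + 2) ^ (2 * K) * ((1 + log x) ^ (3 * K) / x ^ 2) := by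
  rw [norm_div, norm_pow, norm_pow, Real.norm_eq_abs, Real.norm_of_nonneg (by positivity),
    pow_mul, pow_mul, mul_div_assoc', ← mul_pow]
  gcongr
  exact abs_log_mul_sq_sq_mul_log_le hD hx

theorem exists_one_le_const_mul_abs_log_add_pow_le (C c : ℝ) (n : ℕ) :
    ∃ x : ℝ, 1 ≤ x ∧ C * (|log x| + c) ^ n ≤ x := by
  have hbound := ((isLittleO_const_add_log_pow_rpow c n one_pos).const_mul_left C).bound one_pos
  obtain ⟨x, hx, hx1⟩ := (hbound.and (eventually_ge_atTop 1)).exists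
  refine ⟨x, hx1, ?_⟩
  rw [abs_of_nonneg (log_nonneg hx1), add_comm]
  simpa [rpow_one, abs_of_nonneg (zero_le_one.trans hx1)] using (le_abs_self _).trans hx

theorem exploration_constant_exists_general (K : ℕ) :
    (∀ D : ℝ, 0 < D →
      Summable (fun t : ℕ =>
        ((Real.log (D * ((t : ℝ) + 1) ^ 2)) ^ 2 * Real.log ((t : ℝ) + 1)) ^ K /
          ((t : ℝ) + 1) ^ 2)) ∧
    ∃ D : ℝ, 1 ≤ D ∧
      Real.exp 1 * (Real.exp 1 / (K : ℝ)) ^ K *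
        ∑' t : ℕ, ((Real.log (D * ((t : ℝ) + 1) ^ 2)) ^ 2 * Real.log ((t : ℝ) + 1)) ^ K /
          ((t : ℝ) + 1) ^ 2 ≤ D := by
  have one_le_succ (t : ℕ) : (1 : ℝ) ≤ t + 1 := by linarith [t.cast_nonneg (α := ℝ)]
  have hmajorant :
      Summable fun t : ℕ => (1 + log ((t : ℝ) + 1)) ^ (3 * K) / ((t : ℝ) + 1) ^ 2 := by
    simpa only [rpow_two] using summable_one_add_log_pow_div_rpow (3 * K) one_lt_two
  have hbound {D : ℝ} (hD : 0 < D) (t : ℕ) :=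
    norm_log_mul_sq_sq_mul_log_pow_div_sq_le K hD (one_le_succ t)
  have hsummable {D : ℝ} (hD : 0 < D) := (hmajorant.mul_left _).of_norm_bounded (hbound hD)
  refine ⟨fun D hD => hsummable hD, ?_⟩
  set E := exp 1 * (exp 1 / (K : ℝ)) ^ K
  set S := ∑' t : ℕ, (1 + log ((t : ℝ) + 1)) ^ (3 * K) / ((t : ℝ) + 1) ^ 2
  obtain ⟨D, hD1, hD⟩ := exists_one_le_const_mul_abs_log_add_pow_le (E * S) 2 (2 * K)
  have hD0 : 0 < D := one_pos.trans_le hD1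
  refine ⟨D, hD1, ?_⟩
  calc E * ∑' t : ℕ, (log (D * ((t : ℝ) + 1) ^ 2) ^ 2 * log ((t : ℝ) + 1)) ^ K /
          ((t : ℝ) + 1) ^ 2
      ≤ E * ∑' t : ℕ, (|log D| + 2) ^ (2 * K) *
          ((1 + log ((t : ℝ) + 1)) ^ (3 * K) / ((t : ℝ) + 1) ^ 2) := by
        refine mul_le_mul_of_nonneg_left ?_ (by positivity)
        exact Summable.tsum_le_tsum (fun t => (le_norm_self _).trans (hbound hD0 t))
          (hsummable hD0) (hmajorant.mul_left _)
    _ = E * S * (|log D| + 2) ^ (2 * K) := by rw [tsum_mul_left]; ring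
    _ ≤ D := hD

/-- For every `K ≥ 1` and `D > 0`, the series
`∑_{t=1}^∞ ((log(D t²))² log t)^K / t²` converges, and there exists `D ≥ 1` satisfying
the self-referential inequality `D ≥ e (e/K)^K ∑_{t=1}^∞ ((log(D t²))² log t)^K / t²`. -/
theorem exploration_constant_exists (K : ℕ) (hK : 1 ≤ K) :
    (∀ D : ℝ, 0 < D →
      Summable (fun t : ℕ =>
        ((Real.log (D * ((t : ℝ) + 1) ^ 2)) ^ 2 * Real.log ((t : ℝ) + 1)) ^ K /
          ((t : ℝ) + 1) ^ 2)) ∧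
    ∃ D : ℝ, 1 ≤ D ∧
      Real.exp 1 * (Real.exp 1 / (K : ℝ)) ^ K *
        ∑' t : ℕ, ((Real.log (D * ((t : ℝ) + 1) ^ 2)) ^ 2 * Real.log ((t : ℝ) + 1)) ^ K /
          ((t : ℝ) + 1) ^ 2 ≤ D :=
  exploration_constant_exists_general K
end
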